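/- arXiv:0711.3955 — 6 statements merged into one kernel-verified Lean document; each statement's English description precedes it below -/
import Mathlib

section
/- Let (c_k)_{k∈ℤ} be complex numbers such that |c_1|² ≥ ρ for some ρ > 0 and ∑_{k∈ℤ} (2πk)⁴|c_k|² ≤ C₀ < ∞. Then, with h = ρ/C₀, for every integer p ≥ 2 one has ∑_{q∈ℤ, q≠0} |c_{pq}|² ≤ (1 − h) ∑_{q∈ℤ, q≠0} |c_q|². -/
set_option maxHeartbeats 1000000

lemma stmt_1_aux (f : ℤ → ℝ) (hfnn : ∀ k, 0 ≤ f k) (p : ℤ) (hp : 2 ≤ p)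
    (hs1 : Summable fun q : {q : ℤ // q ≠ 0} => f q) :
    (∑' q : {q : ℤ // q ≠ 0}, f (p * q))
      ≤ (∑' q : {q : ℤ // q ≠ 0}, f q) - f 1 := by
  have hp0 : p ≠ 0 := by omega
  have one_ne : (1 : ℤ) ≠ 0 := one_ne_zero
  have hinj : Function.Injective (fun q : {q : ℤ // q ≠ 0} =>
      (⟨p * q, mul_ne_zero hp0 q.2⟩ : {q : ℤ // q ≠ 0})) := by
    intro a b hab
    simp only [Subtype.mk.injEq] at hab
    exact Subtype.ext (mul_left_cancel₀ hp0 hab)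
  have hne1 : ∀ b : {q : ℤ // q ≠ 0},
      (⟨p * b, mul_ne_zero hp0 b.2⟩ : {q : ℤ // q ≠ 0}) ≠ ⟨1, one_ne⟩ := by
    intro b h
    have hval : p * (b : ℤ) = 1 := congrArg Subtype.val h
    have hb : 1 ≤ |(b : ℤ)| := Int.one_le_abs b.2
    have h2 : (2:ℤ) ≤ |p * b| := by
      rw [abs_mul]
      calc (2:ℤ) = 2 * 1 := by ring
        _ ≤ |p| * |(b:ℤ)| := by
            apply mul_le_mul _ hb (by norm_num) (by positivity)
            rw [abs_of_nonneg (by omega : (0:ℤ) ≤ p)]; exact hp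
    rw [hval] at h2
    norm_num at h2
  have hg : Summable fun x : {q : ℤ // q ≠ 0} =>
      if x = (⟨1, one_ne⟩ : {q : ℤ // q ≠ 0}) then (0:ℝ) else f x := by
    refine Summable.of_nonneg_of_le (fun x => ?_) (fun x => ?_) hs1
    · split
      · exact le_refl 0
      · exact hfnn _
    · split
      · exact hfnn _
      · exact le_refl _
  have hsplit := Summable.tsum_eq_add_tsum_ite hs1 (⟨1, one_ne⟩ : {q : ℤ // q ≠ 0})
  have hmain : (∑' q : {q : ℤ // q ≠ 0}, f (p * q))
      ≤ ∑' x : {q : ℤ // q ≠ 0},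
          if x = (⟨1, one_ne⟩ : {q : ℤ // q ≠ 0}) then (0:ℝ) else f x := by
    refine Summable.tsum_le_tsum_of_inj
      (fun q : {q : ℤ // q ≠ 0} => (⟨p * q, mul_ne_zero hp0 q.2⟩ : {q : ℤ // q ≠ 0}))
      hinj (fun x _ => ?_) (fun b => ?_) (hs1.comp_injective hinj) hg
    · split
      · exact le_refl 0
      · exact hfnn _
    · simp only [hne1 b, if_false]
      exact le_refl _
  linarith [hmain, hsplit.symm.le]

/-- Let `(c k)_{k ∈ ℤ}` be complex numbers with `|c 1|² ≥ ρ > 0` and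
`∑_{k ∈ ℤ} (2πk)⁴ |c k|² ≤ C₀ < ∞`. Then, with `h = ρ / C₀`, for every integer `p ≥ 2`,
`∑_{q ≠ 0} |c (p q)|² ≤ (1 - h) ∑_{q ≠ 0} |c q|²`. -/
theorem stmt_1 (c : ℤ → ℂ) (ρ C₀ : ℝ) (hρ : 0 < ρ)
    (h1 : ρ ≤ ‖c 1‖ ^ 2)
    (hsum : Summable fun k : ℤ => (2 * Real.pi * k) ^ 4 * ‖c k‖ ^ 2)
    (hC₀ : ∑' k : ℤ, (2 * Real.pi * k) ^ 4 * ‖c k‖ ^ 2 ≤ C₀)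
    (p : ℤ) (hp : 2 ≤ p) :
    ∑' q : {q : ℤ // q ≠ 0}, ‖c (p * q)‖ ^ 2
      ≤ (1 - ρ / C₀) * ∑' q : {q : ℤ // q ≠ 0}, ‖c q‖ ^ 2 := by
  have hfnn : ∀ k : ℤ, (0:ℝ) ≤ ‖c k‖ ^ 2 := fun k => by positivity
  have hπ : (1 : ℝ) ≤ 2 * Real.pi := by nlinarith [Real.pi_gt_three]
  have hone : ∀ q : ℤ, q ≠ 0 → (1 : ℝ) ≤ (2 * Real.pi * q) ^ 4 := by
    intro q hq
    have hq2 : (1 : ℤ) ≤ q ^ 2 := by rcases hq.lt_or_gt with h | h <;> nlinarith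
    have hq2r : (1 : ℝ) ≤ (q : ℝ) ^ 2 := by exact_mod_cast hq2
    have h44 : (1 : ℝ) ≤ ((q : ℝ) ^ 2) ^ 2 := one_le_pow₀ hq2r
    have h24 : (1 : ℝ) ≤ (2 * Real.pi) ^ 4 := one_le_pow₀ hπ
    calc (1 : ℝ) = 1 * 1 := by ring
      _ ≤ (2 * Real.pi) ^ 4 * ((q : ℝ) ^ 2) ^ 2 :=
          mul_le_mul h24 h44 (by norm_num) (by positivity)
      _ = (2 * Real.pi * q) ^ 4 := by ring
  have hkey : ∀ q : ℤ, q ≠ 0 → ‖c q‖ ^ 2 ≤ (2 * Real.pi * q) ^ 4 * ‖c q‖ ^ 2 := by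
    intro q hq
    nlinarith [hone q hq, hfnn q]
  have hsub : Summable fun q : {q : ℤ // q ≠ 0} =>
      (2 * Real.pi * (q : ℤ)) ^ 4 * ‖c (q : ℤ)‖ ^ 2 := hsum.subtype _
  have hs1 : Summable fun q : {q : ℤ // q ≠ 0} => ‖c (q : ℤ)‖ ^ 2 :=
    Summable.of_nonneg_of_le (fun q => hfnn q) (fun q => hkey q q.2) hsub
  -- S ≤ C₀
  have hS_le : (∑' q : {q : ℤ // q ≠ 0}, ‖c (q : ℤ)‖ ^ 2) ≤ C₀ := by
    refine le_trans (Summable.tsum_le_tsum (fun q => hkey q q.2) hs1 hsub) (le_trans ?_ hC₀)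
    exact Summable.tsum_le_tsum_of_inj Subtype.val Subtype.val_injective
      (fun k _ => by positivity) (fun q => le_refl _) hsub hsum
  -- C₀ > 0
  have hC0 : 0 < C₀ := by
    have hterm : (2 * Real.pi * ((1:ℤ):ℝ)) ^ 4 * ‖c 1‖ ^ 2
        ≤ ∑' k : ℤ, (2 * Real.pi * k) ^ 4 * ‖c k‖ ^ 2 :=
      Summable.le_tsum hsum 1 (fun j _ => by positivity)
    have h2 : ρ ≤ (2 * Real.pi * ((1:ℤ):ℝ)) ^ 4 * ‖c 1‖ ^ 2 := by
      push_cast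
      nlinarith [one_le_pow₀ (n := 4) hπ, hfnn 1]
    linarith
  have hT_le := stmt_1_aux (fun k => ‖c k‖ ^ 2) hfnn p hp hs1
  have hdiv : ρ / C₀ * (∑' q : {q : ℤ // q ≠ 0}, ‖c (q : ℤ)‖ ^ 2) ≤ ρ := by
    have h₁ : ρ / C₀ * (∑' q : {q : ℤ // q ≠ 0}, ‖c (q : ℤ)‖ ^ 2) ≤ ρ / C₀ * C₀ :=
      mul_le_mul_of_nonneg_left hS_le (div_nonneg hρ.le hC0.le)
    rwa [div_mul_cancel₀ ρ hC0.ne'] at h₁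
  nlinarith [hT_le, hdiv, h1]
end

section
/- With the above notation, |Γ(θ) − T ∑_{k∈ℤ} λ_k |c_k|²| ≤ 2θ‖c‖₁²/π + (2N+1) θ² ‖c‖₁² / (π² T). -/
/-!
At `τ = θ` the sampling points are `a_{k,l} = (T/θ)(l - k)`, so the kernel `l ↦ φ̂(a_{k,l})`
equals `1` at `l = k` and is at most `θ/(πT)` elsewhere, since `|φ̂(x)| ≤ 1/(π|x|)`. Hence
`∑_l c_l φ̂(a_{k,l})` is within `ε = θ‖c‖₁/(πT)` of `c_k`, the squared moduli differ by at most
`(2|c_k| + ε)ε`, and summing over the at most `2N+1` indices with `0 ≤ λ_k ≤ 1` gives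
`|Γ(θ) - T ∑ λ_k |c_k|²| ≤ T(2‖c‖₁ε + (2N+1)ε²)`, which is the claimed bound.
-/

noncomputable def phihat (x : ℝ) : ℝ :=
  if x = 0 then 1 else Real.sin (Real.pi * x) / (Real.pi * x)

open Finset

lemma phihat_zero : phihat 0 = 1 := by simp [phihat]

lemma abs_phihat_le_inv {x : ℝ} (hx : x ≠ 0) : |phihat x| ≤ (Real.pi * |x|)⁻¹ := by
  rw [phihat, if_neg hx, abs_div, abs_mul, abs_of_pos Real.pi_pos, div_eq_mul_inv]
  exact mul_le_of_le_one_left (by positivity) (Real.abs_sin_le_one _)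

lemma abs_phihat_mul_intCast_le {r : ℝ} (hr : 0 < r) {n : ℤ} (hn : n ≠ 0) :
    |phihat (r * n)| ≤ (Real.pi * r)⁻¹ := by
  have hn' : (1 : ℝ) ≤ |(n : ℝ)| := by exact_mod_cast Int.one_le_abs hn
  refine (abs_phihat_le_inv (by positivity)).trans (inv_anti₀ (by positivity) ?_)
  rw [abs_mul, abs_of_pos hr]
  exact mul_le_mul_of_nonneg_left (le_mul_of_one_le_right hr.le hn') Real.pi_pos.le

lemma norm_tsum_mul_kernel_sub_le {c : ℤ → ℂ} (hc : Summable fun l => ‖c l‖) {g : ℤ → ℝ}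
    {B : ℝ} (hg0 : g 0 = 1) (hgB : ∀ n ≠ 0, |g n| ≤ B) (k : ℤ) :
    ‖∑' l, c l * (g (l - k) : ℂ) - c k‖ ≤ B * ∑' l, ‖c l‖ := by
  have hB : 0 ≤ B := (abs_nonneg _).trans (hgB 1 one_ne_zero)
  have hg_le : ∀ n, |g n| ≤ max 1 B := fun n => by
    rcases eq_or_ne n 0 with rfl | hn
    · simp [hg0]
    · exact (hgB n hn).trans (le_max_right _ _)
  have hsum : Summable fun l => c l * (g (l - k) : ℂ) :=
    .of_norm_bounded (hc.mul_left (max 1 B)) fun l => by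
      rw [norm_mul, Complex.norm_real, Real.norm_eq_abs, mul_comm]
      exact mul_le_mul_of_nonneg_right (hg_le _) (norm_nonneg _)
  rw [hsum.tsum_eq_add_tsum_ite k, sub_self, hg0, Complex.ofReal_one, mul_one,
    add_sub_cancel_left]
  refine tsum_of_norm_bounded (hc.hasSum.mul_left B) fun l => ?_
  split_ifs with hl
  · simpa using mul_nonneg hB (norm_nonneg (c l))
  · rw [norm_mul, Complex.norm_real, Real.norm_eq_abs, mul_comm]
    exact mul_le_mul_of_nonneg_right (hgB _ (sub_ne_zero.mpr hl)) (norm_nonneg _)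

lemma abs_sq_norm_sub_sq_norm_le {E : Type*} [SeminormedAddCommGroup E] {x y : E} {ε : ℝ}
    (h : ‖x - y‖ ≤ ε) : |‖x‖ ^ 2 - ‖y‖ ^ 2| ≤ (2 * ‖y‖ + ε) * ε := by
  have hε : 0 ≤ ε := (norm_nonneg _).trans h
  have hdiff : |‖x‖ - ‖y‖| ≤ ε := (abs_norm_sub_norm_le x y).trans h
  have hsum : ‖x‖ + ‖y‖ ≤ 2 * ‖y‖ + ε := by linarith [(abs_le.mp hdiff).2]
  calc |‖x‖ ^ 2 - ‖y‖ ^ 2| = (‖x‖ + ‖y‖) * |‖x‖ - ‖y‖| := by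
        rw [sq_sub_sq, abs_mul, abs_of_nonneg (by positivity)]
    _ ≤ (2 * ‖y‖ + ε) * ε := mul_le_mul hsum hdiff (abs_nonneg _) (by positivity)

lemma abs_sum_weighted_sq_norm_sub_le {ι E : Type*} [SeminormedAddCommGroup E] (s : Finset ι)
    {w : ι → ℝ} (hw : ∀ i, 0 ≤ w i ∧ w i ≤ 1) {f c : ι → E} {ε : ℝ}
    (h : ∀ i, ‖f i - c i‖ ≤ ε) :
    |∑ i ∈ s, w i * ‖f i‖ ^ 2 - ∑ i ∈ s, w i * ‖c i‖ ^ 2|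
      ≤ 2 * ε * ∑ i ∈ s, ‖c i‖ + #s * ε ^ 2 := by
  rw [← sum_sub_distrib]
  refine (abs_sum_le_sum_abs _ _).trans ?_
  calc ∑ i ∈ s, |w i * ‖f i‖ ^ 2 - w i * ‖c i‖ ^ 2|
      ≤ ∑ i ∈ s, (2 * ‖c i‖ + ε) * ε := sum_le_sum fun i _ => by
        rw [← mul_sub, abs_mul, abs_of_nonneg (hw i).1]
        exact (mul_le_of_le_one_left (abs_nonneg _) (hw i).2).trans
          (abs_sq_norm_sub_sq_norm_le (h i))
    _ = 2 * ε * ∑ i ∈ s, ‖c i‖ + #s * ε ^ 2 := by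
        rw [← sum_mul, sum_add_distrib, ← mul_sum, sum_const, nsmul_eq_mul]
        ring

lemma tsum_eq_sum_Icc_of_abs_gt {M : Type*} [AddCommMonoid M] [TopologicalSpace M]
    {f : ℤ → M} {N : ℕ} (hf : ∀ k : ℤ, (N : ℤ) < |k| → f k = 0) :
    ∑' k, f k = ∑ k ∈ Icc (-(N : ℤ)) N, f k :=
  tsum_eq_sum fun k hk => hf k <| by
    rw [mem_Icc, not_and_or, not_le, not_le] at hk
    rcases hk with hk | hk
    · rw [abs_of_neg (by omega)]; omega
    · rw [abs_of_pos (by omega)]; omega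

theorem stmt_3_general (T θ : ℝ) (hT : 0 < T) (hθ : 0 < θ)
    (c : ℤ → ℂ) (hc : Summable fun l : ℤ => ‖c l‖)
    (N : ℕ) (lam : ℤ → ℝ)
    (hrange : ∀ k : ℤ, 0 ≤ lam k ∧ lam k ≤ 1)
    (hsupp : ∀ k : ℤ, (N : ℤ) < |k| → lam k = 0) :
    |T * (∑' k : ℤ, lam k *
          ‖∑' l : ℤ, c l * (phihat ((T / θ) * ((l : ℝ) - (k : ℝ) * θ / θ)) : ℂ)‖ ^ 2)
        - T * ∑' k : ℤ, lam k * ‖c k‖ ^ 2|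
      ≤ 2 * θ * (∑' l : ℤ, ‖c l‖) ^ 2 / Real.pi
        + (2 * N + 1) * θ ^ 2 * (∑' l : ℤ, ‖c l‖) ^ 2 / (Real.pi ^ 2 * T) := by
  set S := ∑' l : ℤ, ‖c l‖
  have hr : 0 < T / θ := div_pos hT hθ
  have hclose : ∀ k : ℤ,
      ‖∑' l : ℤ, c l * (phihat ((T / θ) * ((l : ℝ) - (k : ℝ))) : ℂ) - c k‖
        ≤ (Real.pi * (T / θ))⁻¹ * S := fun k => by
    simpa using norm_tsum_mul_kernel_sub_le hc (g := fun n : ℤ => phihat (T / θ * n))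
      (by simp [phihat_zero]) (fun n hn => abs_phihat_mul_intCast_le hr hn) k
  have hsumc : ∑ k ∈ Icc (-(N : ℤ)) N, ‖c k‖ ≤ S :=
    hc.sum_le_tsum _ fun _ _ => norm_nonneg _
  have hcard : (#(Icc (-(N : ℤ)) N) : ℝ) = 2 * N + 1 := by
    rw [Int.card_Icc, show (N : ℤ) + 1 - -N = ((2 * N + 1 : ℕ) : ℤ) by push_cast; ring,
      Int.toNat_natCast]
    push_cast; ring
  simp_rw [mul_div_cancel_right₀ _ hθ.ne']
  rw [tsum_eq_sum_Icc_of_abs_gt fun k hk => by rw [hsupp k hk, zero_mul],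
    tsum_eq_sum_Icc_of_abs_gt fun k hk => by rw [hsupp k hk, zero_mul], ← mul_sub, abs_mul,
    abs_of_pos hT]
  refine (mul_le_mul_of_nonneg_left
    (abs_sum_weighted_sq_norm_sub_le _ hrange hclose) hT.le).trans ?_
  rw [hcard]
  have hS : 0 ≤ S := tsum_nonneg fun _ => norm_nonneg _
  have hpi := Real.pi_pos
  calc T * (2 * ((Real.pi * (T / θ))⁻¹ * S) * ∑ k ∈ Icc (-(N : ℤ)) N, ‖c k‖
        + (2 * N + 1) * ((Real.pi * (T / θ))⁻¹ * S) ^ 2)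
      ≤ T * (2 * ((Real.pi * (T / θ))⁻¹ * S) * S
        + (2 * N + 1) * ((Real.pi * (T / θ))⁻¹ * S) ^ 2) := by gcongr
    _ = _ := by field_simp

/-- With `a_{k,l}(τ) = (T/θ)(l - kθ/τ)` and
`Γ(τ) = T ∑_k λ_k |∑_l c_l φ̂(a_{k,l}(τ))|²`, one has
`|Γ(θ) - T ∑_k λ_k |c_k|²| ≤ 2θ‖c‖₁²/π + (2N+1)θ²‖c‖₁²/(π²T)`. -/
theorem stmt_3 (T θ : ℝ) (hT : 0 < T) (hθ : 0 < θ)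
    (c : ℤ → ℂ) (hc : Summable fun l : ℤ => ‖c l‖)
    (N : ℕ) (hN : 0 < N) (lam : ℤ → ℝ)
    (hlam0 : lam 0 = 0) (hsym : ∀ k : ℤ, lam (-k) = lam k)
    (hrange : ∀ k : ℤ, 0 ≤ lam k ∧ lam k ≤ 1)
    (hsupp : ∀ k : ℤ, (N : ℤ) < |k| → lam k = 0) :
    |T * (∑' k : ℤ, lam k *
          ‖∑' l : ℤ, c l * (phihat ((T / θ) * ((l : ℝ) - (k : ℝ) * θ / θ)) : ℂ)‖ ^ 2)
        - T * ∑' k : ℤ, lam k * ‖c k‖ ^ 2|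
      ≤ 2 * θ * (∑' l : ℤ, ‖c l‖) ^ 2 / Real.pi
        + (2 * N + 1) * θ ^ 2 * (∑' l : ℤ, ‖c l‖) ^ 2 / (Real.pi ^ 2 * T) :=
  stmt_3_general T θ hT hθ c hc N lam hrange hsupp
end

section
/- With the above notation, let γ ≥ 1 and M > 0, and let τ > 0 be such that for every integer k with λ_k ≠ 0 and every integer l with |l| ≤ γ one has |a_{k,l}(τ)| ≥ M. Then Γ(τ) ≤ T ‖λ‖₁ ( ‖c‖₁/(πM) + ∑_{|l| > γ} |c_l| )², where ‖λ‖₁ = ∑_{k∈ℤ} λ_k. -/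
lemma abs_phihat_le_one (x : ℝ) : |phihat x| ≤ 1 := by
  unfold phihat
  split
  · simp
  · rw [abs_div]
    apply div_le_one_of_le₀ Real.abs_sin_le_abs (abs_nonneg _)

lemma abs_phihat_le (x : ℝ) (hx : x ≠ 0) : |phihat x| ≤ 1 / (Real.pi * |x|) := by
  unfold phihat
  rw [if_neg hx, abs_div, abs_mul, abs_of_pos Real.pi_pos]
  have hx' : 0 < Real.pi * |x| := mul_pos Real.pi_pos (abs_pos.mpr hx)
  exact (div_le_div_iff_of_pos_right hx').mpr (Real.abs_sin_le_one _)

/-- With `a_{k,l}(τ) = (T/θ)(l - kθ/τ)` and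
`Γ(τ) = T ∑_k λ_k |∑_l c_l φ̂(a_{k,l}(τ))|²`: if `γ ≥ 1`, `M > 0` and `τ > 0` is such that
`|a_{k,l}(τ)| ≥ M` whenever `λ_k ≠ 0` and `|l| ≤ γ`, then
`Γ(τ) ≤ T ‖λ‖₁ (‖c‖₁/(πM) + ∑_{|l|>γ} |c_l|)²`. -/
theorem stmt_4 (T θ : ℝ) (hT : 0 < T) (hθ : 0 < θ)
    (c : ℤ → ℂ) (hc : Summable fun l : ℤ => ‖c l‖)
    (N : ℕ) (hN : 0 < N) (lam : ℤ → ℝ)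
    (hlam0 : lam 0 = 0) (hsym : ∀ k : ℤ, lam (-k) = lam k)
    (hrange : ∀ k : ℤ, 0 ≤ lam k ∧ lam k ≤ 1)
    (hsupp : ∀ k : ℤ, (N : ℤ) < |k| → lam k = 0)
    (γ M : ℝ) (hγ : 1 ≤ γ) (hM : 0 < M) (τ : ℝ) (hτ : 0 < τ)
    (hfar : ∀ k l : ℤ, lam k ≠ 0 → |(l : ℝ)| ≤ γ →
      M ≤ |(T / θ) * ((l : ℝ) - (k : ℝ) * θ / τ)|) :
    T * (∑' k : ℤ, lam k *
        ‖∑' l : ℤ, c l * (phihat ((T / θ) * ((l : ℝ) - (k : ℝ) * θ / τ)) : ℂ)‖ ^ 2)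
      ≤ T * (∑' k : ℤ, lam k) *
          ((∑' l : ℤ, ‖c l‖) / (Real.pi * M)
            + ∑' l : ℤ, if γ < |(l : ℝ)| then ‖c l‖ else 0) ^ 2 := by
  set a : ℤ → ℤ → ℝ := fun k l => (T / θ) * ((l : ℝ) - (k : ℝ) * θ / τ) with ha
  have hπM : 0 < Real.pi * M := mul_pos Real.pi_pos hM
  -- summability of indicator sum
  have hind : Summable fun l : ℤ => (if γ < |(l : ℝ)| then ‖c l‖ else 0) := by
    apply Summable.of_nonneg_of_le (fun l => by positivity) (fun l => ?_) hc
    split <;> simp [norm_nonneg]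
  set B : ℝ := (∑' l : ℤ, ‖c l‖) / (Real.pi * M)
            + ∑' l : ℤ, if γ < |(l : ℝ)| then ‖c l‖ else 0 with hB
  have hB0 : 0 ≤ B := by
    apply add_nonneg
    · apply div_nonneg _ hπM.le
      exact tsum_nonneg fun l => norm_nonneg _
    · exact tsum_nonneg fun l => by positivity
  -- key bound for each k with lam k ≠ 0
  have key : ∀ k : ℤ, lam k ≠ 0 →
      ‖∑' l : ℤ, c l * (phihat (a k l) : ℂ)‖ ≤ B := by
    intro k hk
    have hsum : Summable fun l : ℤ => ‖c l * (phihat (a k l) : ℂ)‖ := by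
      apply Summable.of_nonneg_of_le (fun l => norm_nonneg _) (fun l => ?_) hc
      rw [norm_mul]
      calc ‖c l‖ * ‖(phihat (a k l) : ℂ)‖ ≤ ‖c l‖ * 1 := by
            gcongr
            rw [Complex.norm_real, Real.norm_eq_abs]
            exact abs_phihat_le_one _
        _ = ‖c l‖ := mul_one _
    calc ‖∑' l : ℤ, c l * (phihat (a k l) : ℂ)‖
        ≤ ∑' l : ℤ, ‖c l * (phihat (a k l) : ℂ)‖ := norm_tsum_le_tsum_norm hsum
      _ ≤ ∑' l : ℤ, (‖c l‖ / (Real.pi * M)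
            + (if γ < |(l : ℝ)| then ‖c l‖ else 0)) := by
          apply Summable.tsum_le_tsum _ hsum ((hc.div_const _).add hind)
          intro l
          rw [norm_mul, Complex.norm_real, Real.norm_eq_abs]
          by_cases hl : γ < |(l : ℝ)|
          · rw [if_pos hl]
            calc ‖c l‖ * |phihat (a k l)| ≤ ‖c l‖ * 1 := by
                  gcongr; exact abs_phihat_le_one _
              _ = ‖c l‖ := mul_one _
              _ ≤ ‖c l‖ / (Real.pi * M) + ‖c l‖ := by
                  have : 0 ≤ ‖c l‖ / (Real.pi * M) := by positivity
                  linarith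
          · rw [if_neg hl]
            push_neg at hl
            have hMa := hfar k l hk hl
            have hMa' : M ≤ |a k l| := hMa
            have hane : a k l ≠ 0 := by
              intro h0
              rw [h0, abs_zero] at hMa'
              linarith
            have h1 := abs_phihat_le (a k l) hane
            have h2 : 1 / (Real.pi * |a k l|) ≤ 1 / (Real.pi * M) := by
              gcongr
            calc ‖c l‖ * |phihat (a k l)| ≤ ‖c l‖ * (1 / (Real.pi * M)) := by
                  gcongr
                  exact h1.trans h2
              _ = ‖c l‖ / (Real.pi * M) := by ring
              _ ≤ ‖c l‖ / (Real.pi * M) + 0 := by simp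
      _ = (∑' l : ℤ, ‖c l‖ / (Real.pi * M))
            + ∑' l : ℤ, (if γ < |(l : ℝ)| then ‖c l‖ else 0) :=
          Summable.tsum_add (hc.div_const _) hind
      _ = B := by rw [hB, tsum_div_const]
  -- termwise bound over k
  have hterm : ∀ k : ℤ,
      lam k * ‖∑' l : ℤ, c l * (phihat (a k l) : ℂ)‖ ^ 2 ≤ lam k * B ^ 2 := by
    intro k
    by_cases hk : lam k = 0
    · simp [hk]
    · have hkey := key k hk
      have := (hrange k).1
      gcongr
  -- summability over k (finite support)
  have hfin : ∀ f : ℤ → ℝ, (∀ k : ℤ, lam k = 0 → f k = 0) → Summable f := by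
    intro f hf
    apply summable_of_ne_finset_zero (s := Finset.Icc (-(N : ℤ)) (N : ℤ))
    intro k hk
    apply hf
    apply hsupp
    simp only [Finset.mem_Icc, not_and, not_le] at hk
    rcases abs_cases k with ⟨h1, h2⟩ | ⟨h1, h2⟩ <;>
      [rcases le_or_gt (-(N : ℤ)) k with h | h; rcases le_or_gt (-(N : ℤ)) k with h | h] <;>
      first
      | (exfalso; have := hk h; omega)
      | omega
  have hS1 : Summable fun k : ℤ =>
      lam k * ‖∑' l : ℤ, c l * (phihat (a k l) : ℂ)‖ ^ 2 :=
    hfin _ (fun k hk => by simp [hk])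
  have hS2 : Summable fun k : ℤ => lam k * B ^ 2 :=
    hfin _ (fun k hk => by simp [hk])
  have hsum_le : (∑' k : ℤ, lam k * ‖∑' l : ℤ, c l * (phihat (a k l) : ℂ)‖ ^ 2)
      ≤ ∑' k : ℤ, lam k * B ^ 2 := Summable.tsum_le_tsum hterm hS1 hS2
  have heq : (∑' k : ℤ, lam k * B ^ 2) = (∑' k : ℤ, lam k) * B ^ 2 :=
    tsum_mul_right
  calc T * (∑' k : ℤ, lam k * ‖∑' l : ℤ, c l * (phihat (a k l) : ℂ)‖ ^ 2)
      ≤ T * ((∑' k : ℤ, lam k) * B ^ 2) := by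
        apply mul_le_mul_of_nonneg_left _ hT.le
        rw [← heq]; exact hsum_le
    _ = T * (∑' k : ℤ, lam k) * B ^ 2 := by ring
end

section
/- There exist constants C > 0 and D > 0 such that for all u ∈ ℝ, φ̂(u)² − 1 ≤ −C u²/(D + u²). -/
open Real

lemma phihat_eq_sinc (x : ℝ) : phihat x = sinc (π * x) := by
  simp only [phihat, sinc, mul_eq_zero, pi_ne_zero, false_or]

lemma cos_sq_mul_sq_add_one_le {y : ℝ} (hy : |y| ≤ π / 2) : cos y ^ 2 * (y ^ 2 + 1) ≤ 1 := by
  obtain ⟨hy₁, hy₂⟩ := abs_le.mp hy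
  have hcos_nonneg : 0 ≤ cos y := cos_nonneg_of_mem_Icc ⟨hy₁, hy₂⟩
  have hcos_le : cos y ≤ 1 / √(y ^ 2 + 1) :=
    cos_le_one_div_sqrt_sq_add_one (by linarith [pi_pos]) (by linarith [pi_pos])
  have hpos : 0 < y ^ 2 + 1 := by positivity
  calc cos y ^ 2 * (y ^ 2 + 1) ≤ (1 / √(y ^ 2 + 1)) ^ 2 * (y ^ 2 + 1) := by gcongr
    _ = 1 := by rw [div_pow, sq_sqrt hpos.le]; field_simp

lemma sin_sq_mul_four_add_sq_le (x : ℝ) : sin x ^ 2 * (4 + x ^ 2) ≤ 4 * x ^ 2 := by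
  rcases le_total |x| π with hx | hx
  · have hcos := cos_sq_mul_sq_add_one_le (y := x / 2) (by rw [abs_div, abs_two]; linarith)
    have hsin : sin (x / 2) ^ 2 ≤ (x / 2) ^ 2 := sin_sq_le_sq
    have hdouble : sin x = 2 * sin (x / 2) * cos (x / 2) := by rw [← sin_two_mul]; ring_nf
    calc sin x ^ 2 * (4 + x ^ 2)
        = 16 * sin (x / 2) ^ 2 * (cos (x / 2) ^ 2 * ((x / 2) ^ 2 + 1)) := by
          rw [hdouble]; ring
      _ ≤ 16 * (x / 2) ^ 2 * 1 := by gcongr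
      _ = 4 * x ^ 2 := by ring
  · have hx_sq : π ^ 2 ≤ x ^ 2 := by rw [← sq_abs x]; gcongr
    nlinarith [sin_sq_le_one x, pi_gt_three]

lemma sinc_sq_sub_one_le (x : ℝ) : sinc x ^ 2 - 1 ≤ -(x ^ 2 / (4 + x ^ 2)) := by
  rcases eq_or_ne x 0 with rfl | hx
  · simp
  rw [sinc_of_ne_zero hx, div_pow, div_sub_one (pow_ne_zero 2 hx), le_neg, ← neg_div,
    div_le_div_iff₀ (by positivity) (by positivity)]
  nlinarith [sin_sq_mul_four_add_sq_le x]

/-- There exist constants `C, D > 0` such that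
`φ̂(u)² - 1 ≤ -C u²/(D + u²)` for all real `u`. -/
theorem stmt_9 :
    ∃ C D : ℝ, 0 < C ∧ 0 < D ∧
      ∀ u : ℝ, phihat u ^ 2 - 1 ≤ -(C * u ^ 2 / (D + u ^ 2)) := by
  refine ⟨1, 4 / π ^ 2, one_pos, by positivity, fun u => ?_⟩
  have hscale : 1 * u ^ 2 / (4 / π ^ 2 + u ^ 2) = (π * u) ^ 2 / (4 + (π * u) ^ 2) := by
    field_simp
  rw [phihat_eq_sinc, hscale]
  exact sinc_sq_sub_one_le (π * u)
end

section
/- Let (α_k)_{k∈ℕ} be a sequence of independent standard Gaussian random variables on a probability space, let (β_k)_{k∈ℕ} be real numbers with ∑_k |β_k| < ∞, and let γ > 0 satisfy 8γ β_k < 1 for every k. Then E[exp(2γ ∑_k β_k α_k²)] = exp(−(1/2) ∑_k log(1 − 4γβ_k)) ≤ exp(2γ ∑_k β_k + 8γ² ∑_k β_k²). -/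
/-!
For a standard Gaussian `X` and `b < 1/2`, the Gaussian integral gives
`E[exp(b X²)] = (1 - 2b)^(-1/2)`, so by independence the partial sums `S_n = ∑_{k<n} c_k α_k²`
satisfy `E[exp S_n] = exp(-(1/2) ∑_{k<n} log(1 - 2c_k))`. Dominated convergence passes to the
limit: `exp S_n` is dominated by the monotone limit of `exp(∑_{k<n} max(c_k, 0) α_k²)`, whose
expectations stay bounded because `∑ log(1 - 2 max(c_k, 0))` converges. The upper bound is
then termwise `log(1 - x) ≥ -x - x²` for `x < 1/2`.
-/

open MeasureTheory ProbabilityTheory Filter Real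
open scoped ENNReal

lemma gaussianPDFReal_mul_exp_mul_sq (b x : ℝ) :
    gaussianPDFReal 0 1 x * exp (b * x ^ 2) = (√(2 * π))⁻¹ * exp (-(1 / 2 - b) * x ^ 2) := by
  simp only [gaussianPDFReal, NNReal.coe_one, mul_one, sub_zero, mul_assoc, ← exp_add]
  ring_nf

lemma integrable_exp_mul_sq_gaussianReal {b : ℝ} (hb : b < 1 / 2) :
    Integrable (fun x => exp (b * x ^ 2)) (gaussianReal 0 1) := by
  have hpdf : Measurable fun x => (gaussianPDFReal 0 1 x).toNNReal :=
    (measurable_gaussianPDFReal 0 1).real_toNNReal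
  rw [gaussianReal_of_var_ne_zero 0 one_ne_zero]
  change Integrable _ (volume.withDensity fun x => ((gaussianPDFReal 0 1 x).toNNReal : ℝ≥0∞))
  rw [integrable_withDensity_iff_integrable_smul hpdf]
  simp only [NNReal.smul_def, Real.coe_toNNReal _ (gaussianPDFReal_nonneg 0 1 _), smul_eq_mul,
    gaussianPDFReal_mul_exp_mul_sq]
  exact (integrable_exp_neg_mul_sq (by linarith)).const_mul _

lemma integral_exp_mul_sq_gaussianReal {b : ℝ} (hb : b < 1 / 2) :
    ∫ x, exp (b * x ^ 2) ∂gaussianReal 0 1 = exp (-(1 / 2) * log (1 - 2 * b)) := by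
  have h2b : 0 < 1 - 2 * b := by linarith
  rw [integral_gaussianReal_eq_integral_smul one_ne_zero]
  simp only [smul_eq_mul, gaussianPDFReal_mul_exp_mul_sq]
  rw [integral_const_mul, integral_gaussian, mul_comm (-(1 / 2)), exp_mul, exp_log h2b,
    rpow_neg h2b.le, ← sqrt_eq_rpow, ← sqrt_inv, ← sqrt_inv, ← sqrt_mul (by positivity)]
  congr 1
  field_simp

section GaussianSquares

variable {Ω ι : Type*} [MeasurableSpace Ω] {μ : Measure Ω} {α : ι → Ω → ℝ}

lemma integrable_exp_mul_sq_of_map_eq_gaussianReal {X : Ω → ℝ} (hX : Measurable X)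
    (hgauss : μ.map X = gaussianReal 0 1) {b : ℝ} (hb : b < 1 / 2) :
    Integrable (fun ω => exp (b * X ω ^ 2)) μ := by
  have h := integrable_exp_mul_sq_gaussianReal hb
  rw [← hgauss] at h
  exact (integrable_map_measure h.aestronglyMeasurable hX.aemeasurable).1 h

lemma integral_exp_mul_sq_of_map_eq_gaussianReal {X : Ω → ℝ} (hX : Measurable X)
    (hgauss : μ.map X = gaussianReal 0 1) {b : ℝ} (hb : b < 1 / 2) :
    ∫ ω, exp (b * X ω ^ 2) ∂μ = exp (-(1 / 2) * log (1 - 2 * b)) := by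
  have h := integrable_exp_mul_sq_gaussianReal hb
  rw [← hgauss] at h
  rw [← integral_map hX.aemeasurable h.aestronglyMeasurable, hgauss,
    integral_exp_mul_sq_gaussianReal hb]

variable (hmeas : ∀ k, Measurable (α k)) (hindep : iIndepFun α μ)
  (hgauss : ∀ k, μ.map (α k) = gaussianReal 0 1)
include hmeas hindep hgauss

lemma integrable_exp_sum_mul_sq {c : ι → ℝ} (hc : ∀ k, c k < 1 / 2) (s : Finset ι) :
    Integrable (fun ω => exp (∑ k ∈ s, c k * α k ω ^ 2)) μ := by
  have := hindep.isProbabilityMeasure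
  have h := (hindep.comp (fun k x => c k * x ^ 2) (fun k => by fun_prop)).integrable_exp_mul_sum
    (t := 1) (s := s) (fun k => (hmeas k).pow_const 2 |>.const_mul _) fun k _ => by
      simpa only [one_mul, Function.comp_apply, mul_assoc]
        using integrable_exp_mul_sq_of_map_eq_gaussianReal (hmeas k) (hgauss k) (hc k)
  simpa only [one_mul, Finset.sum_apply, Function.comp_apply] using h

lemma integral_exp_sum_mul_sq {c : ι → ℝ} (hc : ∀ k, c k < 1 / 2) (s : Finset ι) :
    ∫ ω, exp (∑ k ∈ s, c k * α k ω ^ 2) ∂μ = exp (∑ k ∈ s, -(1 / 2) * log (1 - 2 * c k)) := by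
  have h := (hindep.comp (fun k x => c k * x ^ 2) (fun k => by fun_prop)).mgf_sum
    (t := 1) (fun k => (hmeas k).pow_const 2 |>.const_mul _) s
  simp only [mgf, one_mul, Finset.sum_apply, Function.comp_apply] at h
  rw [h, exp_sum]
  exact Finset.prod_congr rfl fun k _ =>
    integral_exp_mul_sq_of_map_eq_gaussianReal (hmeas k) (hgauss k) (hc k)

end GaussianSquares

lemma neg_add_sq_le_log_one_sub {x : ℝ} (hx : x < 1 / 2) : -(x + x ^ 2) ≤ log (1 - x) := by
  rw [le_log_iff_exp_le (by linarith), exp_neg, inv_le_iff_one_le_mul₀ (exp_pos _)]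
  rcases le_or_gt x 0 with hx0 | hx0
  · nlinarith [add_one_le_exp (x + x ^ 2)]
  · nlinarith [quadratic_le_exp_of_nonneg (x := x + x ^ 2) (by positivity)]

lemma abs_log_one_sub_le {x : ℝ} (hx : x < 1 / 2) : |log (1 - x)| ≤ 2 * |x| := by
  rcases le_or_gt 0 x with hx0 | hx0
  · have := neg_add_sq_le_log_one_sub hx
    rw [abs_of_nonpos (log_nonpos (by linarith) (by linarith)), abs_of_nonneg hx0]
    nlinarith
  · have := log_le_sub_one_of_pos (x := 1 - x) (by linarith)
    rw [abs_of_nonneg (log_nonneg (by linarith)), abs_of_neg hx0]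
    linarith

lemma summable_log_one_sub {x : ℕ → ℝ} (hx : Summable fun k => |x k|) (hx' : ∀ k, x k < 1 / 2) :
    Summable fun k => log (1 - x k) :=
  .of_norm_bounded (hx.mul_left 2) fun k => abs_log_one_sub_le (hx' k)

lemma exists_integrable_ge_of_monotone {Ω : Type*} [MeasurableSpace Ω] {μ : Measure Ω}
    {f : ℕ → Ω → ℝ} (hf : ∀ n, Integrable (f n) μ) (hf0 : ∀ n ω, 0 ≤ f n ω)
    (hmono : ∀ ω, Monotone fun n => f n ω) {C : ℝ} (hC : ∀ n, ∫ ω, f n ω ∂μ ≤ C) :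
    ∃ g : Ω → ℝ, Integrable g μ ∧ ∀ n, ∀ᵐ ω ∂μ, f n ω ≤ g ω := by
  set G : Ω → ℝ≥0∞ := fun ω => ⨆ n, ENNReal.ofReal (f n ω)
  have hmeas : ∀ n, AEMeasurable (fun ω => ENNReal.ofReal (f n ω)) μ :=
    fun n => (hf n).aemeasurable.ennreal_ofReal
  have hG : AEMeasurable G μ := AEMeasurable.iSup hmeas
  have hGfin : ∫⁻ ω, G ω ∂μ ≠ ∞ := by
    refine ne_top_of_le_ne_top (ENNReal.ofReal_ne_top (r := C)) ?_
    rw [lintegral_iSup' hmeas (.of_forall fun ω m n hmn => ENNReal.ofReal_le_ofReal (hmono ω hmn))]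
    refine iSup_le fun n => ?_
    rw [← ofReal_integral_eq_lintegral_ofReal (hf n) (.of_forall (hf0 n))]
    exact ENNReal.ofReal_le_ofReal (hC n)
  refine ⟨fun ω => (G ω).toReal, integrable_toReal_of_lintegral_ne_top hG hGfin, fun n => ?_⟩
  filter_upwards [ae_lt_top' hG hGfin] with ω hω
  exact (ENNReal.ofReal_le_iff_le_toReal hω.ne).1 (le_iSup (fun n => ENNReal.ofReal (f n ω)) n)

lemma neg_half_log_one_sub_le {x : ℝ} (hx : x < 1 / 2) :
    -(1 / 2) * log (1 - x) ≤ x / 2 + x ^ 2 / 2 := by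
  linarith [neg_add_sq_le_log_one_sub hx]

lemma summable_sq_of_summable_abs {x : ℕ → ℝ} (hx : Summable fun k => |x k|) :
    Summable fun k => x k ^ 2 :=
  .of_norm_bounded (hx.mul_left (∑' j, |x j|)) fun k => by
    rw [norm_pow, norm_eq_abs, sq]
    exact mul_le_mul_of_nonneg_right (hx.le_tsum k fun j _ => abs_nonneg _) (abs_nonneg _)

section GaussianSeries

variable {Ω : Type*} [MeasurableSpace Ω] {μ : Measure Ω} {α : ℕ → Ω → ℝ}
  (hmeas : ∀ k, Measurable (α k)) (hindep : iIndepFun α μ)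
  (hgauss : ∀ k, μ.map (α k) = gaussianReal 0 1)
include hmeas hindep hgauss

open Finset in
lemma exists_integrable_ge_exp_sum_range_mul_sq {c : ℕ → ℝ} (hc : Summable fun k => |c k|)
    (hc' : ∀ k, c k < 1 / 4) :
    ∃ g : Ω → ℝ, Integrable g μ ∧
      ∀ n, ∀ᵐ ω ∂μ, exp (∑ k ∈ range n, c k * α k ω ^ 2) ≤ g ω := by
  set cp : ℕ → ℝ := fun k => max (c k) 0
  have hcp : ∀ k, cp k < 1 / 4 := fun k => max_lt (hc' k) (by norm_num)
  have hterm_nonneg : ∀ k, 0 ≤ -(1 / 2) * log (1 - 2 * cp k) := fun k => by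
    have : 0 ≤ cp k := le_max_right _ _
    nlinarith [log_nonpos (x := 1 - 2 * cp k) (by linarith [hcp k]) (by linarith)]
  have hsum : Summable fun k => -(1 / 2) * log (1 - 2 * cp k) := by
    refine (summable_log_one_sub (.of_nonneg_of_le (fun _ => abs_nonneg _) (fun k => ?_)
      (hc.mul_left 2)) fun k => by linarith [hcp k]).mul_left _
    rw [abs_of_nonneg (by positivity)]
    exact mul_le_mul_of_nonneg_left (max_le (le_abs_self _) (abs_nonneg _)) zero_le_two
  obtain ⟨g, hg, hle⟩ := exists_integrable_ge_of_monotone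
    (f := fun n ω => exp (∑ k ∈ range n, cp k * α k ω ^ 2))
    (fun n => integrable_exp_sum_mul_sq hmeas hindep hgauss (fun k => by linarith [hcp k]) _)
    (fun _ _ => (exp_pos _).le)
    (fun ω m n hmn => exp_le_exp.2 <| sum_le_sum_of_subset_of_nonneg (range_subset_range.2 hmn)
      fun k _ _ => by positivity)
    (C := exp (∑' k, -(1 / 2) * log (1 - 2 * cp k))) fun n => by
      rw [integral_exp_sum_mul_sq hmeas hindep hgauss (fun k => by linarith [hcp k])]
      exact exp_le_exp.2 (hsum.sum_le_tsum _ fun k _ => hterm_nonneg k)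
  refine ⟨g, hg, fun n => (hle n).mono fun ω hω => le_trans (exp_le_exp.2 ?_) hω⟩
  exact sum_le_sum fun k _ => mul_le_mul_of_nonneg_right (le_max_left _ _) (sq_nonneg _)

open Finset in
lemma integral_exp_eq_of_tendsto_sum_range_mul_sq {c : ℕ → ℝ} (hc : Summable fun k => |c k|)
    (hc' : ∀ k, c k < 1 / 4) {S : Ω → ℝ}
    (hS : ∀ᵐ ω ∂μ, Tendsto (fun n => ∑ k ∈ range n, c k * α k ω ^ 2) atTop (nhds (S ω))) :
    ∫ ω, exp (S ω) ∂μ = exp (-(1 / 2) * ∑' k, log (1 - 2 * c k)) := by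
  have hc2 : ∀ k, c k < 1 / 2 := fun k => by linarith [hc' k]
  obtain ⟨g, hg, hle⟩ := exists_integrable_ge_exp_sum_range_mul_sq hmeas hindep hgauss hc hc'
  have hlim : Tendsto (fun n => ∫ ω, exp (∑ k ∈ range n, c k * α k ω ^ 2) ∂μ) atTop
      (nhds (∫ ω, exp (S ω) ∂μ)) :=
    tendsto_integral_of_dominated_convergence g
      (fun n => (integrable_exp_sum_mul_sq hmeas hindep hgauss hc2 _).aestronglyMeasurable) hg
      (fun n => (hle n).mono fun ω h => by rwa [norm_of_nonneg (exp_pos _).le])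
      (hS.mono fun ω h => (continuous_exp.tendsto _).comp h)
  refine tendsto_nhds_unique hlim ?_
  have hlog := summable_log_one_sub (x := fun k => 2 * c k)
    (by simpa only [abs_mul, abs_two] using hc.mul_left 2) fun k => by linarith [hc' k]
  simp only [integral_exp_sum_mul_sq hmeas hindep hgauss hc2, ← mul_sum]
  exact (continuous_exp.tendsto _).comp (hlog.hasSum.tendsto_sum_nat.const_mul _)

end GaussianSeries

theorem stmt_14_general {Ω : Type*} [MeasureSpace Ω]
    (α : ℕ → Ω → ℝ) (hmeas : ∀ k, Measurable (α k))
    (hindep : iIndepFun α ℙ)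
    (hgauss : ∀ k, Measure.map (α k) ℙ = gaussianReal 0 1)
    (β : ℕ → ℝ) (hβ : Summable fun k => |β k|)
    (γ : ℝ) (hγ : 0 < γ) (hγβ : ∀ k, 8 * γ * β k < 1)
    (S : Ω → ℝ)
    (hS : ∀ᵐ ω ∂ℙ, Tendsto (fun n => ∑ k ∈ Finset.range n, β k * (α k ω) ^ 2)
      atTop (nhds (S ω))) :
    (∫ ω, Real.exp (2 * γ * S ω) ∂ℙ)
        = Real.exp (-(1 / 2) * ∑' k, Real.log (1 - 4 * γ * β k)) ∧
    (∫ ω, Real.exp (2 * γ * S ω) ∂ℙ)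
        ≤ Real.exp (2 * γ * (∑' k, β k) + 8 * γ ^ 2 * ∑' k, (β k) ^ 2) := by
  have hc : Summable fun k => |2 * γ * β k| := by
    simpa only [abs_mul, abs_two, abs_of_pos hγ, mul_assoc] using hβ.mul_left (2 * γ)
  have hS' : ∀ᵐ ω ∂ℙ, Tendsto (fun n => ∑ k ∈ Finset.range n, 2 * γ * β k * α k ω ^ 2) atTop
      (nhds (2 * γ * S ω)) :=
    hS.mono fun ω h => by simpa only [Finset.mul_sum, mul_assoc] using h.const_mul (2 * γ)
  have hint := integral_exp_eq_of_tendsto_sum_range_mul_sq hmeas hindep hgauss hc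
    (fun k => by linarith [hγβ k]) hS'
  simp only [show ∀ k, 2 * (2 * γ * β k) = 4 * γ * β k from fun k => by ring] at hint
  refine ⟨hint, hint ▸ exp_le_exp.2 ?_⟩
  have hx : ∀ k, 4 * γ * β k < 1 / 2 := fun k => by linarith [hγβ k]
  have hlog := summable_log_one_sub (x := fun k => 4 * γ * β k)
    (by simpa only [abs_mul, abs_of_pos (by positivity : (0 : ℝ) < 4 * γ)] using
      hβ.mul_left (4 * γ)) hx
  have hβ' := hβ.of_abs
  have hβsq := summable_sq_of_summable_abs hβ
  rw [← tsum_mul_left, ← tsum_mul_left, ← tsum_mul_left,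
    ← (hβ'.mul_left _).tsum_add (hβsq.mul_left _)]
  refine (hlog.mul_left _).tsum_le_tsum (fun k => ?_) ((hβ'.mul_left _).add (hβsq.mul_left _))
  linarith [neg_half_log_one_sub_le (hx k)]

/-- Let `(α k)` be independent standard Gaussian random variables, `(β k)` real numbers
with `∑ |β k| < ∞`, and `γ > 0` with `8γ β_k < 1` for all `k`. Then, for
`S = ∑ β k (α k)²` (the a.s. limit of the partial sums),
`E[exp(2γS)] = exp(-(1/2) ∑ log(1 - 4γβ_k)) ≤ exp(2γ ∑ β_k + 8γ² ∑ β_k²)`. -/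
theorem stmt_14 {Ω : Type*} [MeasureSpace Ω] [IsProbabilityMeasure (ℙ : Measure Ω)]
    (α : ℕ → Ω → ℝ) (hmeas : ∀ k, Measurable (α k))
    (hindep : iIndepFun α ℙ)
    (hgauss : ∀ k, Measure.map (α k) ℙ = gaussianReal 0 1)
    (β : ℕ → ℝ) (hβ : Summable fun k => |β k|)
    (γ : ℝ) (hγ : 0 < γ) (hγβ : ∀ k, 8 * γ * β k < 1)
    (S : Ω → ℝ)
    (hS : ∀ᵐ ω ∂ℙ, Tendsto (fun n => ∑ k ∈ Finset.range n, β k * (α k ω) ^ 2)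
      atTop (nhds (S ω))) :
    (∫ ω, Real.exp (2 * γ * S ω) ∂ℙ)
        = Real.exp (-(1 / 2) * ∑' k, Real.log (1 - 4 * γ * β k)) ∧
    (∫ ω, Real.exp (2 * γ * S ω) ∂ℙ)
        ≤ Real.exp (2 * γ * (∑' k, β k) + 8 * γ ^ 2 * ∑' k, (β k) ^ 2) :=
  stmt_14_general α hmeas hindep hgauss β hβ γ hγ hγβ S hS
end

section
/- Let (X_τ)_{τ∈I} be a real-valued stochastic process indexed by a compact interval I = [a, b], jointly measurable, such that almost surely the sample path τ ↦ X_τ is continuously differentiable on I with derivative X'_τ. Let μ > 0 and x > 0, and assume that sup_{τ∈I} E[exp(2μ X_τ)] < ∞ and that τ ↦ (E[|X'_τ|²])^{1/2} is integrable on I. Then P( sup_{τ∈I} X_τ > x ) ≤ exp(−μx) · sup_{τ∈I} (E[exp(2μ X_τ)])^{1/2} · ( 1 + μ ∫_I (E[|X'_τ|²])^{1/2} dτ ). -/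
/-!
Pathwise, the fundamental theorem of calculus gives `exp (μ X_τ) ≤ Z` for every `τ ∈ [a, b]`, where
`Z = exp (μ X_a) + μ ∫_a^b |X'_s| exp (μ X_s) ds` (`expDominator`). Markov's inequality then gives
`P(sup X > x) ≤ e^{-μx} E Z`, and `E Z` is bounded by Fubini and Cauchy–Schwarz:
`E[|X'_s| e^{μ X_s}] ≤ (E |X'_s|²)^{1/2} (E e^{2μ X_s})^{1/2}`. Fubini applies because `X'` is
jointly a.e. measurable, being the a.e. limit of the difference quotients of `X`.
-/

open MeasureTheory Filter Set Real
open scoped Topology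

section CauchySchwarz

variable {α : Type*} [MeasurableSpace α] {μ : Measure α}

lemma integral_mul_le_sqrt_mul_sqrt_of_nonneg {f g : α → ℝ} (hf0 : 0 ≤ᵐ[μ] f) (hg0 : 0 ≤ᵐ[μ] g)
    (hf : MemLp f 2 μ) (hg : MemLp g 2 μ) :
    ∫ x, f x * g x ∂μ ≤ √(∫ x, f x ^ 2 ∂μ) * √(∫ x, g x ^ 2 ∂μ) := by
  have h := integral_mul_le_Lp_mul_Lq_of_nonneg HolderConjugate.two_two hf0 hg0
    (by simpa using hf) (by simpa using hg)
  simpa only [rpow_two, ← sqrt_eq_rpow] using h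

lemma memLp_two_abs_of_integrable_sq {f : α → ℝ} (hf : Integrable (fun x => f x ^ 2) μ) :
    MemLp (fun x => |f x|) 2 μ := by
  have hm : AEStronglyMeasurable (fun x => |f x|) μ := by
    simpa only [sqrt_sq_eq_abs] using continuous_sqrt.comp_aestronglyMeasurable hf.1
  exact (memLp_two_iff_integrable_sq hm).2 (by simpa only [sq_abs] using hf)

lemma exp_mul_sq (c y : ℝ) : exp (c * y) ^ 2 = exp (2 * c * y) := by
  rw [sq, ← exp_add]
  ring_nf

lemma memLp_two_exp_mul {f : α → ℝ} {c : ℝ} (hf : AEStronglyMeasurable f μ)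
    (hexp : Integrable (fun x => exp (2 * c * f x)) μ) : MemLp (fun x => exp (c * f x)) 2 μ := by
  have hm : AEStronglyMeasurable (fun x => exp (c * f x)) μ :=
    continuous_exp.comp_aestronglyMeasurable (hf.const_mul c)
  exact (memLp_two_iff_integrable_sq hm).2 (by simpa only [exp_mul_sq] using hexp)

variable {V Y : α → ℝ} {c S : ℝ}

lemma integral_abs_mul_exp_mul_le (hV : Integrable (fun x => V x ^ 2) μ)
    (hY : AEStronglyMeasurable Y μ) (hexp : Integrable (fun x => exp (2 * c * Y x)) μ)
    (hS : ∫ x, exp (2 * c * Y x) ∂μ ≤ S) :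
    ∫ x, |V x| * exp (c * Y x) ∂μ ≤ √(∫ x, V x ^ 2 ∂μ) * √S := by
  have h := integral_mul_le_sqrt_mul_sqrt_of_nonneg (.of_forall fun x => abs_nonneg (V x))
    (.of_forall fun x => (exp_pos (c * Y x)).le) (memLp_two_abs_of_integrable_sq hV)
    (memLp_two_exp_mul hY hexp)
  simp only [sq_abs, exp_mul_sq] at h
  exact h.trans (by gcongr)

lemma integral_exp_mul_le [IsProbabilityMeasure μ] (hY : AEStronglyMeasurable Y μ)
    (hexp : Integrable (fun x => exp (2 * c * Y x)) μ) (hS : ∫ x, exp (2 * c * Y x) ∂μ ≤ S) :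
    ∫ x, exp (c * Y x) ∂μ ≤ √S := by
  simpa using integral_abs_mul_exp_mul_le (V := fun _ => 1) (by simp) hY hexp hS

end CauchySchwarz

section Pathwise

variable {a b τ : ℝ}

lemma le_add_setIntegral_abs_of_hasDerivWithinAt {g g' : ℝ → ℝ}
    (hg : ∀ s ∈ Icc a b, HasDerivWithinAt g (g' s) (Icc a b) s) (hg' : ContinuousOn g' (Icc a b))
    (hτ : τ ∈ Icc a b) : g τ ≤ g a + ∫ s in Icc a b, |g' s| := by
  have hsub : Icc a τ ⊆ Icc a b := Icc_subset_Icc_right hτ.2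
  have hint : IntegrableOn (fun s => |g' s|) (Icc a b) := hg'.abs.integrableOn_Icc
  have hFTC : g τ - g a ≤ ∫ s in a..τ, |g' s| :=
    intervalIntegral.sub_le_integral_of_hasDeriv_right_of_le_Ico hτ.1
      (fun s hs => (hg s (hsub hs)).continuousWithinAt.mono hsub)
      (fun s hs => (hg s (hsub (Ico_subset_Icc_self hs))).mono_of_mem_nhdsWithin
        (Icc_mem_nhdsGT_of_mem ⟨hs.1, hs.2.trans_le hτ.2⟩))
      (hint.mono_set hsub) (fun s _ => le_abs_self _)
  have hmono : ∫ s in a..τ, |g' s| ≤ ∫ s in Icc a b, |g' s| := by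
    rw [intervalIntegral.integral_of_le hτ.1]
    exact setIntegral_mono_set hint (.of_forall fun _ => abs_nonneg _)
      (Ioc_subset_Icc_self.trans hsub).eventuallyLE
  linarith

lemma exp_mul_le_add_setIntegral_of_hasDerivWithinAt {f f' : ℝ → ℝ} {μ : ℝ} (hμ : 0 ≤ μ)
    (hf : ∀ s ∈ Icc a b, HasDerivWithinAt f (f' s) (Icc a b) s) (hf' : ContinuousOn f' (Icc a b))
    (hτ : τ ∈ Icc a b) :
    exp (μ * f τ) ≤ exp (μ * f a) + μ * ∫ s in Icc a b, |f' s| * exp (μ * f s) := by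
  have hg : ∀ s ∈ Icc a b, HasDerivWithinAt (fun s => exp (μ * f s))
      (exp (μ * f s) * (μ * f' s)) (Icc a b) s :=
    fun s hs => ((hf s hs).const_mul μ).exp
  have hg' : ContinuousOn (fun s => exp (μ * f s) * (μ * f' s)) (Icc a b) :=
    (continuousOn_const.mul fun s hs => (hf s hs).continuousWithinAt).rexp.mul
      (continuousOn_const.mul hf')
  have habs : ∀ s, |exp (μ * f s) * (μ * f' s)| = μ * (|f' s| * exp (μ * f s)) := fun s => by
    rw [abs_mul, abs_mul, abs_exp, abs_of_nonneg hμ]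
    ring
  simpa only [habs, integral_const_mul] using
    le_add_setIntegral_abs_of_hasDerivWithinAt hg hg' hτ

end Pathwise

lemma tendsto_slope_of_hasDerivWithinAt_Icc {f : ℝ → ℝ} {f' a b t : ℝ}
    (hf : HasDerivWithinAt f f' (Icc a b) t) (ht : t ∈ Ico a b) :
    Tendsto (fun n : ℕ => slope f t (t + 1 / ((n : ℝ) + 1))) atTop (𝓝 f') := by
  have hright : Tendsto (slope f t) (𝓝[>] t) (𝓝 f') :=
    (hasDerivWithinAt_iff_tendsto_slope' (lt_irrefl t)).1
      (hf.mono_of_mem_nhdsWithin (Icc_mem_nhdsGT_of_mem ht))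
  refine hright.comp (tendsto_nhdsWithin_of_tendsto_nhds_of_eventually_within _ ?_
    (.of_forall fun n => ?_))
  · simpa using tendsto_const_nhds.add (tendsto_one_div_add_atTop_nhds_zero_nat (𝕜 := ℝ))
  · simp only [mem_Ioi, lt_add_iff_pos_right]
    positivity

lemma aemeasurable_uncurry_of_hasDerivWithinAt {Ω : Type*} [MeasurableSpace Ω]
    {ν : Measure Ω} {X X' : ℝ → Ω → ℝ} {a b : ℝ} (hX : Measurable (Function.uncurry X))
    (hd : ∀ᵐ ω ∂ν, ∀ τ ∈ Icc a b, HasDerivWithinAt (X · ω) (X' τ ω) (Icc a b) τ) :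
    AEMeasurable (Function.uncurry X') ((volume.restrict (Icc a b)).prod ν) := by
  have hX' : Measurable fun p : ℝ × Ω => X p.1 p.2 := hX
  have hIco : ∀ᵐ s ∂volume.restrict (Icc a b), s ∈ Ico a b := by
    filter_upwards [ae_restrict_mem measurableSet_Icc,
      ae_restrict_of_ae (Measure.ae_ne volume b)] with s hs hsb
    exact ⟨hs.1, lt_of_le_of_ne hs.2 hsb⟩
  refine aemeasurable_of_tendsto_metrizable_ae'
    (f := fun n p => slope (X · p.2) p.1 (p.1 + 1 / ((n : ℝ) + 1))) (fun n => ?_) ?_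
  · simp only [slope_def_field, add_sub_cancel_left]
    have h1 : Measurable fun p : ℝ × Ω => X (p.1 + 1 / ((n : ℝ) + 1)) p.2 :=
      hX'.comp ((measurable_fst.add_const _).prodMk measurable_snd)
    exact ((h1.sub hX').div_const _).aemeasurable
  · filter_upwards [Measure.quasiMeasurePreserving_fst.ae hIco,
      Measure.quasiMeasurePreserving_snd.ae hd] with p hp hdp
    exact tendsto_slope_of_hasDerivWithinAt_Icc (hdp p.1 (Ico_subset_Icc_self hp)) hp

lemma integrable_prod_of_integral_norm_le {α β E : Type*} [MeasurableSpace α] [MeasurableSpace β]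
    [NormedAddCommGroup E] {μ : Measure α} {ν : Measure β} [SFinite ν] {H : α × β → E}
    {g : α → ℝ} (hH : AEStronglyMeasurable H (μ.prod ν))
    (hslice : ∀ᵐ x ∂μ, Integrable (fun y => H (x, y)) ν) (hg : Integrable g μ)
    (hle : ∀ᵐ x ∂μ, ∫ y, ‖H (x, y)‖ ∂ν ≤ g x) : Integrable H (μ.prod ν) := by
  refine (integrable_prod_iff hH).2 ⟨hslice, hg.mono' hH.norm.integral_prod_right' ?_⟩
  filter_upwards [hle] with x hx
  rwa [norm_of_nonneg (integral_nonneg fun _ => norm_nonneg _)]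

lemma measureReal_exists_lt_le_exp_mul_integral {T Ω : Type*} [MeasurableSpace Ω]
    {P : Measure Ω} [IsFiniteMeasure P] {X : T → Ω → ℝ} {s : Set T} {Z : Ω → ℝ} {μ : ℝ}
    (hμ : 0 ≤ μ) (hZ0 : 0 ≤ᵐ[P] Z) (hZ : Integrable Z P)
    (hXZ : ∀ᵐ ω ∂P, ∀ τ ∈ s, exp (μ * X τ ω) ≤ Z ω) (x : ℝ) :
    P.real {ω | ∃ τ ∈ s, x < X τ ω} ≤ exp (-(μ * x)) * ∫ ω, Z ω ∂P := by
  have hsub : {ω | ∃ τ ∈ s, x < X τ ω} ≤ᵐ[P] {ω | exp (μ * x) ≤ Z ω} := by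
    filter_upwards [hXZ] with ω hω
    rintro ⟨τ, hτ, hxτ⟩
    exact (exp_le_exp.2 (mul_le_mul_of_nonneg_left hxτ.le hμ)).trans (hω τ hτ)
  have hmarkov := mul_meas_ge_le_integral_of_nonneg hZ0 hZ (exp (μ * x))
  rw [exp_neg, inv_mul_eq_div, le_div_iff₀' (exp_pos _)]
  exact (mul_le_mul_of_nonneg_left (ENNReal.toReal_mono (measure_ne_top P _)
    (measure_mono_ae hsub)) (exp_pos _).le).trans hmarkov

section Dominator

variable {Ω : Type*} {X X' : ℝ → Ω → ℝ} {a b μ S : ℝ}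

variable (X X' a b μ) in
noncomputable def expDominator (ω : Ω) : ℝ :=
  exp (μ * X a ω) + μ * ∫ τ in Icc a b, |X' τ ω| * exp (μ * X τ ω)

lemma expDominator_nonneg (hμ : 0 ≤ μ) (ω : Ω) : 0 ≤ expDominator X X' a b μ ω :=
  add_nonneg (exp_pos _).le
    (mul_nonneg hμ (integral_nonneg fun _ => mul_nonneg (abs_nonneg _) (exp_pos _).le))

variable [MeasurableSpace Ω] {P : Measure Ω}

lemma integrable_prod_abs_mul_exp [SFinite P] (hX : Measurable (Function.uncurry X))
    (hd : ∀ᵐ ω ∂P, ∀ τ ∈ Icc a b, HasDerivWithinAt (X · ω) (X' τ ω) (Icc a b) τ)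
    (hexp : ∀ τ ∈ Icc a b, Integrable (fun ω => exp (2 * μ * X τ ω)) P)
    (hS : ∀ τ ∈ Icc a b, ∫ ω, exp (2 * μ * X τ ω) ∂P ≤ S)
    (hsq : ∀ τ ∈ Icc a b, Integrable (fun ω => X' τ ω ^ 2) P)
    (hsqint : IntegrableOn (fun τ => √(∫ ω, X' τ ω ^ 2 ∂P)) (Icc a b)) :
    Integrable (fun p : ℝ × Ω => |X' p.1 p.2| * exp (μ * X p.1 p.2))
      ((volume.restrict (Icc a b)).prod P) := by
  have hXτ : ∀ τ, AEStronglyMeasurable (X τ) P :=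
    fun τ => hX.of_uncurry_left.aestronglyMeasurable
  refine integrable_prod_of_integral_norm_le ?_ ?_ (hsqint.mul_const √S) ?_
  · exact ((aemeasurable_uncurry_of_hasDerivWithinAt hX hd).abs.mul
      (hX.const_mul μ).exp.aemeasurable).aestronglyMeasurable
  · filter_upwards [ae_restrict_mem measurableSet_Icc] with τ hτ
    exact (memLp_two_abs_of_integrable_sq (hsq τ hτ)).integrable_mul
      (memLp_two_exp_mul (hXτ τ) (hexp τ hτ))
  · filter_upwards [ae_restrict_mem measurableSet_Icc] with τ hτ
    simpa only [norm_mul, norm_abs_eq_norm, norm_eq_abs, abs_exp] using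
      integral_abs_mul_exp_mul_le (hsq τ hτ) (hXτ τ) (hexp τ hτ) (hS τ hτ)

lemma integrable_expDominator [IsFiniteMeasure P] (hX : Measurable (Function.uncurry X))
    (hexpa : Integrable (fun ω => exp (2 * μ * X a ω)) P)
    (hH : Integrable (fun p : ℝ × Ω => |X' p.1 p.2| * exp (μ * X p.1 p.2))
      ((volume.restrict (Icc a b)).prod P)) :
    Integrable (expDominator X X' a b μ) P :=
  ((memLp_two_exp_mul hX.of_uncurry_left.aestronglyMeasurable hexpa).integrable
    one_le_two).add (hH.integral_prod_right.const_mul μ)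

lemma integral_expDominator_le [IsProbabilityMeasure P] (hμ : 0 ≤ μ) (hab : a ≤ b)
    (hX : Measurable (Function.uncurry X))
    (hexp : ∀ τ ∈ Icc a b, Integrable (fun ω => exp (2 * μ * X τ ω)) P)
    (hS : ∀ τ ∈ Icc a b, ∫ ω, exp (2 * μ * X τ ω) ∂P ≤ S)
    (hsq : ∀ τ ∈ Icc a b, Integrable (fun ω => X' τ ω ^ 2) P)
    (hsqint : IntegrableOn (fun τ => √(∫ ω, X' τ ω ^ 2 ∂P)) (Icc a b))
    (hH : Integrable (fun p : ℝ × Ω => |X' p.1 p.2| * exp (μ * X p.1 p.2))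
      ((volume.restrict (Icc a b)).prod P)) :
    ∫ ω, expDominator X X' a b μ ω ∂P
      ≤ √S * (1 + μ * ∫ τ in Icc a b, √(∫ ω, X' τ ω ^ 2 ∂P)) := by
  have hXτ : ∀ τ, AEStronglyMeasurable (X τ) P :=
    fun τ => hX.of_uncurry_left.aestronglyMeasurable
  have ha : a ∈ Icc a b := ⟨le_rfl, hab⟩
  have hfirst : ∫ ω, exp (μ * X a ω) ∂P ≤ √S :=
    integral_exp_mul_le (hXτ a) (hexp a ha) (hS a ha)
  have hsecond : ∫ τ in Icc a b, ∫ ω, |X' τ ω| * exp (μ * X τ ω) ∂P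
      ≤ (∫ τ in Icc a b, √(∫ ω, X' τ ω ^ 2 ∂P)) * √S := by
    rw [← integral_mul_const]
    exact setIntegral_mono_on hH.integral_prod_left (hsqint.mul_const _) measurableSet_Icc
      fun τ hτ => integral_abs_mul_exp_mul_le (hsq τ hτ) (hXτ τ) (hexp τ hτ) (hS τ hτ)
  unfold expDominator
  rw [integral_add ((memLp_two_exp_mul (hXτ a) (hexp a ha)).integrable one_le_two)
    (hH.integral_prod_right.const_mul μ), integral_const_mul, ← integral_integral_swap hH]
  linarith [mul_le_mul_of_nonneg_left hsecond hμ]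

end Dominator

theorem stmt_15_general {Ω : Type*} [MeasurableSpace Ω] (P : Measure Ω) [IsProbabilityMeasure P]
    (a b : ℝ) (hab : a ≤ b) (X X' : ℝ → Ω → ℝ)
    (hmeas : Measurable (Function.uncurry X))
    (hC1 : ∀ᵐ ω ∂P,
      (∀ τ ∈ Set.Icc a b,
          HasDerivWithinAt (fun s => X s ω) (X' τ ω) (Set.Icc a b) τ) ∧
        ContinuousOn (fun τ => X' τ ω) (Set.Icc a b))
    (μ x : ℝ) (hμ : 0 < μ)
    (hexp : ∀ τ ∈ Set.Icc a b, Integrable (fun ω => Real.exp (2 * μ * X τ ω)) P)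
    (hbdd : BddAbove ((fun τ => ∫ ω, Real.exp (2 * μ * X τ ω) ∂P) '' Set.Icc a b))
    (hsq : ∀ τ ∈ Set.Icc a b, Integrable (fun ω => (X' τ ω) ^ 2) P)
    (hsqint : IntegrableOn (fun τ => Real.sqrt (∫ ω, (X' τ ω) ^ 2 ∂P)) (Set.Icc a b)) :
    (P {ω | ∃ τ ∈ Set.Icc a b, x < X τ ω}).toReal
      ≤ Real.exp (-(μ * x)) *
          Real.sqrt (sSup ((fun τ => ∫ ω, Real.exp (2 * μ * X τ ω) ∂P) '' Set.Icc a b)) *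
          (1 + μ * ∫ τ in Set.Icc a b, Real.sqrt (∫ ω, (X' τ ω) ^ 2 ∂P)) := by
  have hS : ∀ τ ∈ Icc a b, ∫ ω, exp (2 * μ * X τ ω) ∂P
      ≤ sSup ((fun τ => ∫ ω, exp (2 * μ * X τ ω) ∂P) '' Icc a b) :=
    fun τ hτ => le_csSup hbdd ⟨τ, hτ, rfl⟩
  have hH := integrable_prod_abs_mul_exp hmeas (hC1.mono fun _ h => h.1) hexp hS hsq hsqint
  have hXZ : ∀ᵐ ω ∂P, ∀ τ ∈ Icc a b, exp (μ * X τ ω) ≤ expDominator X X' a b μ ω := by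
    filter_upwards [hC1] with ω hω τ hτ
    exact exp_mul_le_add_setIntegral_of_hasDerivWithinAt hμ.le hω.1 hω.2 hτ
  calc P.real {ω | ∃ τ ∈ Icc a b, x < X τ ω}
      ≤ exp (-(μ * x)) * ∫ ω, expDominator X X' a b μ ω ∂P :=
        measureReal_exists_lt_le_exp_mul_integral hμ.le
          (.of_forall (expDominator_nonneg hμ.le))
          (integrable_expDominator hmeas (hexp a ⟨le_rfl, hab⟩) hH) hXZ x
    _ ≤ _ := by
        rw [mul_assoc]
        gcongr
        exact integral_expDominator_le hμ.le hab hmeas hexp hS hsq hsqint hH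

/-- Golubev's maximal inequality: if `(X_τ)_{τ ∈ [a,b]}` is a jointly measurable process
whose sample paths are a.s. continuously differentiable with derivative `X'`, then for
`μ, x > 0`,
`P(sup_{τ ∈ I} X_τ > x) ≤ e^{-μx} sup_{τ ∈ I} (E e^{2μX_τ})^{1/2}
(1 + μ ∫_I (E|X'_τ|²)^{1/2} dτ)`. -/
theorem stmt_15 {Ω : Type*} [MeasurableSpace Ω] (P : Measure Ω) [IsProbabilityMeasure P]
    (a b : ℝ) (hab : a ≤ b) (X X' : ℝ → Ω → ℝ)
    (hmeas : Measurable (Function.uncurry X))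
    (hC1 : ∀ᵐ ω ∂P,
      (∀ τ ∈ Set.Icc a b,
          HasDerivWithinAt (fun s => X s ω) (X' τ ω) (Set.Icc a b) τ) ∧
        ContinuousOn (fun τ => X' τ ω) (Set.Icc a b))
    (μ x : ℝ) (hμ : 0 < μ) (hx : 0 < x)
    (hexp : ∀ τ ∈ Set.Icc a b, Integrable (fun ω => Real.exp (2 * μ * X τ ω)) P)
    (hbdd : BddAbove ((fun τ => ∫ ω, Real.exp (2 * μ * X τ ω) ∂P) '' Set.Icc a b))
    (hsq : ∀ τ ∈ Set.Icc a b, Integrable (fun ω => (X' τ ω) ^ 2) P)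
    (hsqint : IntegrableOn (fun τ => Real.sqrt (∫ ω, (X' τ ω) ^ 2 ∂P)) (Set.Icc a b)) :
    (P {ω | ∃ τ ∈ Set.Icc a b, x < X τ ω}).toReal
      ≤ Real.exp (-(μ * x)) *
          Real.sqrt (sSup ((fun τ => ∫ ω, Real.exp (2 * μ * X τ ω) ∂P) '' Set.Icc a b)) *
          (1 + μ * ∫ τ in Set.Icc a b, Real.sqrt (∫ ω, (X' τ ω) ^ 2 ∂P)) :=
  stmt_15_general P a b hab X X' hmeas hC1 μ x hμ hexp hbdd hsq hsqint
end
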